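/- Let {v_1,…,v_d, w_1,…,w_d} be a symplectic basis of ℝ^{2d} with det B_v ≠ 0 and det B_w ≠ 0. Then for every Schwartz function g on ℝ^d and every (p,q) ∈ ℝ^d × ℝ^d there exists a complex constant c_{p,q} with |c_{p,q}| = 1 such that for all ξ ∈ ℝ^d: 𝓕̃_v(T_{p,q}(g))(ξ) = c_{p,q} e^{2πi q'·ξ} 𝓕̃_v(g)(ξ + p') = c_{p,q} T_{p',q'}(𝓕̃_v(g))(ξ), where p' = A_v p + B_v q and q' = A_w p + B_w q. In particular, in the 𝓕̃_v representation a Gabor system remains a Gabor system, with its set of time-frequency nodes transformed by the symplectic matrix with block rows (A_v, B_v) and (A_w, B_w). -/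

import Mathlib

/-!
STATEMENT 17 (in the modified generalized Fourier transform representation a Gabor
system remains a Gabor system, with nodes transformed by the symplectic matrix with
block rows (A_v, B_v) and (A_w, B_w)). Here ℝ^{2d} is identified with ℝ^d × ℝ^d.
-/

open MeasureTheory Complex Matrix

noncomputable section

namespace BLT17

/-- Euclidean dot product on `ℝ^d`. -/
def dotR {d : ℕ} (x y : Fin d → ℝ) : ℝ := ∑ k, x k * y k

/-- The standard symplectic form on `ℝ^{2d} = ℝ^d × ℝ^d`:
`Ω((x,y),(ξ,η)) = x·η - y·ξ`. -/
def Omega {d : ℕ} (u v : (Fin d → ℝ) × (Fin d → ℝ)) : ℝ :=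
  dotR u.1 v.2 - dotR u.2 v.1

/-- The matrix `A_v(j,k) = v_j^k` (first `d` coordinates). -/
def Amat {d : ℕ} (v : Fin d → (Fin d → ℝ) × (Fin d → ℝ)) : Matrix (Fin d) (Fin d) ℝ :=
  Matrix.of fun j k => (v j).1 k

/-- The matrix `B_v(j,k) = v_j^{k+d}` (last `d` coordinates). -/
def Bmat {d : ℕ} (v : Fin d → (Fin d → ℝ) × (Fin d → ℝ)) : Matrix (Fin d) (Fin d) ℝ :=
  Matrix.of fun j k => (v j).2 k

/-- The matrix `Y_{v,w}(i,j) = Ω(v_i, w_j)`. -/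
def Ymat {d : ℕ} (v w : Fin d → (Fin d → ℝ) × (Fin d → ℝ)) : Matrix (Fin d) (Fin d) ℝ :=
  Matrix.of fun i j => Omega (v i) (w j)

/-- The generalized Fourier transform
`𝓕_v(h)(ξ) = |det B_v|^{-1/2} ∫ h(x) e^{2πi xᵗB_v⁻¹ξ - πi xᵗB_v⁻¹A_v x} dx`. -/
def genFT {d : ℕ} (Av Bv : Matrix (Fin d) (Fin d) ℝ) (h : (Fin d → ℝ) → ℂ)
    (ξ : Fin d → ℝ) : ℂ :=
  ((1 / Real.sqrt |Bv.det| : ℝ) : ℂ) *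
    ∫ x, h x * Complex.exp
      (2 * (Real.pi : ℂ) * Complex.I * (dotR x ((Bv⁻¹).mulVec ξ) : ℝ) -
        (Real.pi : ℂ) * Complex.I * (dotR x ((Bv⁻¹ * Av).mulVec x) : ℝ))

/-- The modified transform `𝓕̃_v(g)(ξ) = e^{-πi ξᵗ(B_v⁻¹)ᵗB_wᵗξ} 𝓕_v(g)(ξ)`
(for a symplectic basis, where `Y_{v,w} = Id`). -/
def FtildeV {d : ℕ} (Av Bv Bw : Matrix (Fin d) (Fin d) ℝ) (g : (Fin d → ℝ) → ℂ)
    (ξ : Fin d → ℝ) : ℂ :=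
  Complex.exp (-((Real.pi : ℂ) * Complex.I *
      (dotR ξ (((Bv⁻¹)ᵀ * Bwᵀ).mulVec ξ) : ℝ))) * genFT Av Bv g ξ

/-- The translation-modulation operator `T_{p,q}(g)(x) = e^{2πi q·x} g(x + p)`. -/
def tmod {d : ℕ} (g : (Fin d → ℝ) → ℂ) (p q : Fin d → ℝ) : (Fin d → ℝ) → ℂ :=
  fun x => Complex.exp (2 * (Real.pi : ℂ) * Complex.I * (dotR q x : ℝ)) * g (x + p)

lemma dotR_eq {d : ℕ} (x y : Fin d → ℝ) : dotR x y = x ⬝ᵥ y := rfl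

lemma bil_transfer {d : ℕ} (x : Fin d → ℝ) (M : Matrix (Fin d) (Fin d) ℝ) (y : Fin d → ℝ) :
    x ⬝ᵥ M *ᵥ y = y ⬝ᵥ Mᵀ *ᵥ x := by
  rw [Matrix.dotProduct_mulVec, ← Matrix.mulVec_transpose, dotProduct_comm]

def phs {d : ℕ} (Bvi S : Matrix (Fin d) (Fin d) ℝ) (x η : Fin d → ℝ) : ℂ :=
  Complex.exp (2 * (Real.pi : ℂ) * Complex.I * (dotR x (Bvi.mulVec η) : ℝ) -
        (Real.pi : ℂ) * Complex.I * (dotR x (S.mulVec x) : ℝ))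

lemma genFT_eq {d : ℕ} (Av Bv : Matrix (Fin d) (Fin d) ℝ) (h : (Fin d → ℝ) → ℂ)
    (ξ : Fin d → ℝ) :
    genFT Av Bv h ξ
      = ((1 / Real.sqrt |Bv.det| : ℝ) : ℂ) * ∫ x, h x * phs Bv⁻¹ (Bv⁻¹ * Av) x ξ := rfl

lemma pointwise {d : ℕ} (Bvi S : Matrix (Fin d) (Fin d) ℝ) (hS : Sᵀ = S)
    (p q p' ξ : Fin d → ℝ) (hBp' : Bvi *ᵥ p' = S *ᵥ p + q) (y : Fin d → ℝ) :
    Complex.exp (2 * (Real.pi : ℂ) * Complex.I * ((q ⬝ᵥ (y - p) : ℝ) : ℂ)) *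
        phs Bvi S (y - p) ξ
      = Complex.exp ((Real.pi : ℂ) * Complex.I *
          ((-(2 * (q ⬝ᵥ p)) - 2 * (p ⬝ᵥ Bvi *ᵥ ξ) - p ⬝ᵥ S *ᵥ p : ℝ) : ℂ)) *
        phs Bvi S y (ξ + p') := by
  unfold phs
  simp only [dotR_eq]
  rw [← Complex.exp_add, ← Complex.exp_add]
  have a1 : q ⬝ᵥ (y - p) = q ⬝ᵥ y - q ⬝ᵥ p := dotProduct_sub q y p
  have a2 : (y - p) ⬝ᵥ Bvi *ᵥ ξ = y ⬝ᵥ Bvi *ᵥ ξ - p ⬝ᵥ Bvi *ᵥ ξ := sub_dotProduct y p _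
  have a3 : (y - p) ⬝ᵥ S *ᵥ (y - p)
      = y ⬝ᵥ S *ᵥ y - p ⬝ᵥ S *ᵥ y - (y ⬝ᵥ S *ᵥ p - p ⬝ᵥ S *ᵥ p) := by
    simp only [Matrix.mulVec_sub, sub_dotProduct, dotProduct_sub]
  have a4 : p ⬝ᵥ S *ᵥ y = y ⬝ᵥ S *ᵥ p := by rw [bil_transfer, hS]
  have a5 : y ⬝ᵥ Bvi *ᵥ (ξ + p') = y ⬝ᵥ Bvi *ᵥ ξ + (y ⬝ᵥ S *ᵥ p + q ⬝ᵥ y) := by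
    rw [Matrix.mulVec_add, hBp', dotProduct_add, dotProduct_add,
      dotProduct_comm y q]
  have key : 2 * (q ⬝ᵥ (y - p)) + (2 * ((y - p) ⬝ᵥ Bvi *ᵥ ξ) - (y - p) ⬝ᵥ S *ᵥ (y - p))
      = (-(2 * (q ⬝ᵥ p)) - 2 * (p ⬝ᵥ Bvi *ᵥ ξ) - p ⬝ᵥ S *ᵥ p)
        + (2 * (y ⬝ᵥ Bvi *ᵥ (ξ + p')) - y ⬝ᵥ S *ᵥ y) := by
    rw [a1, a2, a3, a4, a5]; ring
  calc Complex.exp (2 * (Real.pi : ℂ) * Complex.I * ((q ⬝ᵥ (y - p) : ℝ) : ℂ) +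
        (2 * (Real.pi : ℂ) * Complex.I * (((y - p) ⬝ᵥ Bvi *ᵥ ξ : ℝ) : ℂ) -
          (Real.pi : ℂ) * Complex.I * (((y - p) ⬝ᵥ S *ᵥ (y - p) : ℝ) : ℂ)))
      = Complex.exp ((Real.pi : ℂ) * Complex.I *
          ((2 * (q ⬝ᵥ (y - p)) + (2 * ((y - p) ⬝ᵥ Bvi *ᵥ ξ) - (y - p) ⬝ᵥ S *ᵥ (y - p)) : ℝ) : ℂ)) := by
        congr 1; push_cast; ring
    _ = Complex.exp ((Real.pi : ℂ) * Complex.I *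
          (((-(2 * (q ⬝ᵥ p)) - 2 * (p ⬝ᵥ Bvi *ᵥ ξ) - p ⬝ᵥ S *ᵥ p)
            + (2 * (y ⬝ᵥ Bvi *ᵥ (ξ + p')) - y ⬝ᵥ S *ᵥ y) : ℝ) : ℂ)) := by rw [key]
    _ = _ := by congr 1; push_cast; ring

lemma key_lemma {d : ℕ} (Av Bv Aw Bw : Matrix (Fin d) (Fin d) ℝ)
    (hS : (Bv⁻¹ * Av)ᵀ = Bv⁻¹ * Av)
    (hKsym : ((Bv⁻¹)ᵀ * Bwᵀ)ᵀ = (Bv⁻¹)ᵀ * Bwᵀ)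
    (hKBv : (Bv⁻¹)ᵀ * Bwᵀ * Bv = Bw)
    (hKAv : (Bv⁻¹)ᵀ * Bwᵀ * Av = Aw + (Bv⁻¹)ᵀ)
    (e2 : Bv⁻¹ * Bv = 1)
    (g : (Fin d → ℝ) → ℂ) (p q : Fin d → ℝ) :
    ∃ c : ℂ, ‖c‖ = 1 ∧ ∀ ξ : Fin d → ℝ,
      FtildeV Av Bv Bw (tmod g p q) ξ =
        c * tmod (FtildeV Av Bv Bw g) (Av *ᵥ p + Bv *ᵥ q) (Aw *ᵥ p + Bw *ᵥ q) ξ := by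
  refine ⟨Complex.exp (((Real.pi * (-(2 * (q ⬝ᵥ p)) - p ⬝ᵥ (Bv⁻¹ * Av) *ᵥ p
      + (Av *ᵥ p + Bv *ᵥ q) ⬝ᵥ ((Bv⁻¹)ᵀ * Bwᵀ) *ᵥ (Av *ᵥ p + Bv *ᵥ q)) : ℝ) : ℂ)
      * Complex.I), ?_, ?_⟩
  · exact Complex.norm_exp_ofReal_mul_I _
  intro ξ
  have hBp' : Bv⁻¹ *ᵥ (Av *ᵥ p + Bv *ᵥ q) = (Bv⁻¹ * Av) *ᵥ p + q := by
    rw [Matrix.mulVec_add, Matrix.mulVec_mulVec, Matrix.mulVec_mulVec, e2, Matrix.one_mulVec]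
  -- Step 1: behavior of genFT under tmod
  have hgen : genFT Av Bv (tmod g p q) ξ
      = Complex.exp ((Real.pi : ℂ) * Complex.I *
          ((-(2 * (q ⬝ᵥ p)) - 2 * (p ⬝ᵥ Bv⁻¹ *ᵥ ξ) - p ⬝ᵥ (Bv⁻¹ * Av) *ᵥ p : ℝ) : ℂ))
        * genFT Av Bv g (ξ + (Av *ᵥ p + Bv *ᵥ q)) := by
    rw [genFT_eq, genFT_eq]
    have hfun : (fun x => tmod g p q x * phs Bv⁻¹ (Bv⁻¹ * Av) x ξ)
        = fun x => (fun y => Complex.exp (2 * (Real.pi : ℂ) * Complex.I *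
            ((q ⬝ᵥ (y - p) : ℝ) : ℂ)) * (g y * phs Bv⁻¹ (Bv⁻¹ * Av) (y - p) ξ)) (x + p) := by
      funext x
      simp only [add_sub_cancel_right]
      unfold tmod
      rw [dotR_eq]
      ring
    rw [hfun, integral_add_right_eq_self (fun y => Complex.exp (2 * (Real.pi : ℂ) *
      Complex.I * ((q ⬝ᵥ (y - p) : ℝ) : ℂ)) * (g y * phs Bv⁻¹ (Bv⁻¹ * Av) (y - p) ξ)) p]
    have hfun2 : (fun y => Complex.exp (2 * (Real.pi : ℂ) * Complex.I *
            ((q ⬝ᵥ (y - p) : ℝ) : ℂ)) * (g y * phs Bv⁻¹ (Bv⁻¹ * Av) (y - p) ξ))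
        = fun y => Complex.exp ((Real.pi : ℂ) * Complex.I *
            ((-(2 * (q ⬝ᵥ p)) - 2 * (p ⬝ᵥ Bv⁻¹ *ᵥ ξ) - p ⬝ᵥ (Bv⁻¹ * Av) *ᵥ p : ℝ) : ℂ)) *
            (g y * phs Bv⁻¹ (Bv⁻¹ * Av) y (ξ + (Av *ᵥ p + Bv *ᵥ q))) := by
      funext y
      have hpt := pointwise Bv⁻¹ (Bv⁻¹ * Av) hS p q (Av *ᵥ p + Bv *ᵥ q) ξ hBp' y
      rw [mul_comm (g y), ← mul_assoc, hpt]
      ring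
    rw [hfun2, integral_const_mul]
    ring
  -- Step 2: assembling
  simp only [FtildeV]
  rw [hgen]
  simp only [tmod, FtildeV, dotR_eq]
  -- real quadratic identity
  have hKp'v : ((Bv⁻¹)ᵀ * Bwᵀ) *ᵥ (Av *ᵥ p + Bv *ᵥ q)
      = Aw *ᵥ p + ((Bv⁻¹)ᵀ *ᵥ p + Bw *ᵥ q) := by
    rw [Matrix.mulVec_add, Matrix.mulVec_mulVec, Matrix.mulVec_mulVec, hKAv, hKBv,
      Matrix.add_mulVec, add_assoc]
  have hb5 : (ξ + (Av *ᵥ p + Bv *ᵥ q)) ⬝ᵥ ((Bv⁻¹)ᵀ * Bwᵀ) *ᵥ (ξ + (Av *ᵥ p + Bv *ᵥ q))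
      = ξ ⬝ᵥ ((Bv⁻¹)ᵀ * Bwᵀ) *ᵥ ξ + (ξ ⬝ᵥ ((Bv⁻¹)ᵀ * Bwᵀ) *ᵥ (Av *ᵥ p + Bv *ᵥ q)
        + ((Av *ᵥ p + Bv *ᵥ q) ⬝ᵥ ((Bv⁻¹)ᵀ * Bwᵀ) *ᵥ ξ
          + (Av *ᵥ p + Bv *ᵥ q) ⬝ᵥ ((Bv⁻¹)ᵀ * Bwᵀ) *ᵥ (Av *ᵥ p + Bv *ᵥ q))) := by
    rw [Matrix.mulVec_add ((Bv⁻¹)ᵀ * Bwᵀ) ξ (Av *ᵥ p + Bv *ᵥ q), add_dotProduct,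
      dotProduct_add, dotProduct_add]
    ring
  have hb1 : (Av *ᵥ p + Bv *ᵥ q) ⬝ᵥ ((Bv⁻¹)ᵀ * Bwᵀ) *ᵥ ξ
      = ξ ⬝ᵥ ((Bv⁻¹)ᵀ * Bwᵀ) *ᵥ (Av *ᵥ p + Bv *ᵥ q) := by
    rw [bil_transfer, hKsym]
  have hb2 : ξ ⬝ᵥ ((Bv⁻¹)ᵀ * Bwᵀ) *ᵥ (Av *ᵥ p + Bv *ᵥ q)
      = ξ ⬝ᵥ Aw *ᵥ p + (ξ ⬝ᵥ (Bv⁻¹)ᵀ *ᵥ p + ξ ⬝ᵥ Bw *ᵥ q) := by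
    rw [hKp'v, dotProduct_add, dotProduct_add]
  have hb3 : p ⬝ᵥ Bv⁻¹ *ᵥ ξ = ξ ⬝ᵥ (Bv⁻¹)ᵀ *ᵥ p := bil_transfer p Bv⁻¹ ξ
  have hb4 : (Aw *ᵥ p + Bw *ᵥ q) ⬝ᵥ ξ = ξ ⬝ᵥ Aw *ᵥ p + ξ ⬝ᵥ Bw *ᵥ q := by
    rw [add_dotProduct, dotProduct_comm (Aw *ᵥ p) ξ,
      dotProduct_comm (Bw *ᵥ q) ξ]
  have hre2 : -(ξ ⬝ᵥ ((Bv⁻¹)ᵀ * Bwᵀ) *ᵥ ξ)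
        + (-(2 * (q ⬝ᵥ p)) - 2 * (p ⬝ᵥ Bv⁻¹ *ᵥ ξ) - p ⬝ᵥ (Bv⁻¹ * Av) *ᵥ p)
      = (-(2 * (q ⬝ᵥ p)) - p ⬝ᵥ (Bv⁻¹ * Av) *ᵥ p
          + (Av *ᵥ p + Bv *ᵥ q) ⬝ᵥ ((Bv⁻¹)ᵀ * Bwᵀ) *ᵥ (Av *ᵥ p + Bv *ᵥ q))
        + 2 * ((Aw *ᵥ p + Bw *ᵥ q) ⬝ᵥ ξ)
        - (ξ + (Av *ᵥ p + Bv *ᵥ q)) ⬝ᵥ ((Bv⁻¹)ᵀ * Bwᵀ) *ᵥ (ξ + (Av *ᵥ p + Bv *ᵥ q)) := by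
    rw [hb5, hb1, hb2, hb3, hb4]; ring
  have hsc : Complex.exp (-((Real.pi : ℂ) * Complex.I *
          ((ξ ⬝ᵥ ((Bv⁻¹)ᵀ * Bwᵀ) *ᵥ ξ : ℝ) : ℂ))) *
        Complex.exp ((Real.pi : ℂ) * Complex.I *
          ((-(2 * (q ⬝ᵥ p)) - 2 * (p ⬝ᵥ Bv⁻¹ *ᵥ ξ) - p ⬝ᵥ (Bv⁻¹ * Av) *ᵥ p : ℝ) : ℂ))
      = Complex.exp (((Real.pi * (-(2 * (q ⬝ᵥ p)) - p ⬝ᵥ (Bv⁻¹ * Av) *ᵥ p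
            + (Av *ᵥ p + Bv *ᵥ q) ⬝ᵥ ((Bv⁻¹)ᵀ * Bwᵀ) *ᵥ (Av *ᵥ p + Bv *ᵥ q)) : ℝ) : ℂ)
            * Complex.I) *
        Complex.exp (2 * (Real.pi : ℂ) * Complex.I *
          (((Aw *ᵥ p + Bw *ᵥ q) ⬝ᵥ ξ : ℝ) : ℂ)) *
        Complex.exp (-((Real.pi : ℂ) * Complex.I *
          (((ξ + (Av *ᵥ p + Bv *ᵥ q)) ⬝ᵥ ((Bv⁻¹)ᵀ * Bwᵀ) *ᵥ (ξ + (Av *ᵥ p + Bv *ᵥ q)) : ℝ) : ℂ))) := by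
    rw [← Complex.exp_add, ← Complex.exp_add, ← Complex.exp_add]
    calc Complex.exp (-((Real.pi : ℂ) * Complex.I *
            ((ξ ⬝ᵥ ((Bv⁻¹)ᵀ * Bwᵀ) *ᵥ ξ : ℝ) : ℂ)) +
          (Real.pi : ℂ) * Complex.I *
            ((-(2 * (q ⬝ᵥ p)) - 2 * (p ⬝ᵥ Bv⁻¹ *ᵥ ξ) - p ⬝ᵥ (Bv⁻¹ * Av) *ᵥ p : ℝ) : ℂ))
        = Complex.exp ((Real.pi : ℂ) * Complex.I *
            ((-(ξ ⬝ᵥ ((Bv⁻¹)ᵀ * Bwᵀ) *ᵥ ξ)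
              + (-(2 * (q ⬝ᵥ p)) - 2 * (p ⬝ᵥ Bv⁻¹ *ᵥ ξ) - p ⬝ᵥ (Bv⁻¹ * Av) *ᵥ p) : ℝ) : ℂ)) := by
          congr 1; push_cast; ring
      _ = Complex.exp ((Real.pi : ℂ) * Complex.I *
            (((-(2 * (q ⬝ᵥ p)) - p ⬝ᵥ (Bv⁻¹ * Av) *ᵥ p
                + (Av *ᵥ p + Bv *ᵥ q) ⬝ᵥ ((Bv⁻¹)ᵀ * Bwᵀ) *ᵥ (Av *ᵥ p + Bv *ᵥ q))
              + 2 * ((Aw *ᵥ p + Bw *ᵥ q) ⬝ᵥ ξ)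
              - (ξ + (Av *ᵥ p + Bv *ᵥ q)) ⬝ᵥ ((Bv⁻¹)ᵀ * Bwᵀ) *ᵥ (ξ + (Av *ᵥ p + Bv *ᵥ q)) : ℝ) : ℂ)) := by
          rw [hre2]
      _ = _ := by congr 1; push_cast; ring
  calc Complex.exp (-((Real.pi : ℂ) * Complex.I *
          ((ξ ⬝ᵥ ((Bv⁻¹)ᵀ * Bwᵀ) *ᵥ ξ : ℝ) : ℂ))) *
        (Complex.exp ((Real.pi : ℂ) * Complex.I *
          ((-(2 * (q ⬝ᵥ p)) - 2 * (p ⬝ᵥ Bv⁻¹ *ᵥ ξ) - p ⬝ᵥ (Bv⁻¹ * Av) *ᵥ p : ℝ) : ℂ)) *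
          genFT Av Bv g (ξ + (Av *ᵥ p + Bv *ᵥ q)))
      = (Complex.exp (-((Real.pi : ℂ) * Complex.I *
          ((ξ ⬝ᵥ ((Bv⁻¹)ᵀ * Bwᵀ) *ᵥ ξ : ℝ) : ℂ))) *
        Complex.exp ((Real.pi : ℂ) * Complex.I *
          ((-(2 * (q ⬝ᵥ p)) - 2 * (p ⬝ᵥ Bv⁻¹ *ᵥ ξ) - p ⬝ᵥ (Bv⁻¹ * Av) *ᵥ p : ℝ) : ℂ))) *
          genFT Av Bv g (ξ + (Av *ᵥ p + Bv *ᵥ q)) := by ring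
    _ = (Complex.exp (((Real.pi * (-(2 * (q ⬝ᵥ p)) - p ⬝ᵥ (Bv⁻¹ * Av) *ᵥ p
            + (Av *ᵥ p + Bv *ᵥ q) ⬝ᵥ ((Bv⁻¹)ᵀ * Bwᵀ) *ᵥ (Av *ᵥ p + Bv *ᵥ q)) : ℝ) : ℂ)
            * Complex.I) *
        Complex.exp (2 * (Real.pi : ℂ) * Complex.I *
          (((Aw *ᵥ p + Bw *ᵥ q) ⬝ᵥ ξ : ℝ) : ℂ)) *
        Complex.exp (-((Real.pi : ℂ) * Complex.I *
          (((ξ + (Av *ᵥ p + Bv *ᵥ q)) ⬝ᵥ ((Bv⁻¹)ᵀ * Bwᵀ) *ᵥ (ξ + (Av *ᵥ p + Bv *ᵥ q)) : ℝ) : ℂ)))) *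
          genFT Av Bv g (ξ + (Av *ᵥ p + Bv *ᵥ q)) := by rw [hsc]
    _ = _ := by ring


lemma matrix_facts {d : ℕ} (Av Bv Aw Bw : Matrix (Fin d) (Fin d) ℝ)
    (h1 : Av * Bvᵀ = Bv * Avᵀ) (h2 : Aw * Bwᵀ = Bw * Awᵀ)
    (h3 : Av * Bwᵀ - Bv * Awᵀ = 1)
    (hBv : IsUnit Bv.det) (hBw : IsUnit Bw.det) :
    (Bv⁻¹ * Av)ᵀ = Bv⁻¹ * Av ∧ ((Bv⁻¹)ᵀ * Bwᵀ)ᵀ = (Bv⁻¹)ᵀ * Bwᵀ ∧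
      (Bv⁻¹)ᵀ * Bwᵀ * Bv = Bw ∧ (Bv⁻¹)ᵀ * Bwᵀ * Av = Aw + (Bv⁻¹)ᵀ := by
  have e1 : Bv * Bv⁻¹ = 1 := Matrix.mul_nonsing_inv Bv hBv
  have e2 : Bv⁻¹ * Bv = 1 := Matrix.nonsing_inv_mul Bv hBv
  have f1 : Bw * Bw⁻¹ = 1 := Matrix.mul_nonsing_inv Bw hBw
  have f2 : Bw⁻¹ * Bw = 1 := Matrix.nonsing_inv_mul Bw hBw
  have t1 : Bvᵀ * (Bv⁻¹)ᵀ = 1 := by rw [← Matrix.transpose_mul, e2, Matrix.transpose_one]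
  have tw1 : Bwᵀ * (Bw⁻¹)ᵀ = 1 := by rw [← Matrix.transpose_mul, f2, Matrix.transpose_one]
  have tw2 : (Bw⁻¹)ᵀ * Bwᵀ = 1 := by rw [← Matrix.transpose_mul, f1, Matrix.transpose_one]
  have d1 : Bv⁻¹ * Av = Avᵀ * (Bv⁻¹)ᵀ := by
    calc Bv⁻¹ * Av = Bv⁻¹ * Av * (Bvᵀ * (Bv⁻¹)ᵀ) := by rw [t1, mul_one]
      _ = Bv⁻¹ * (Av * Bvᵀ) * (Bv⁻¹)ᵀ := by simp only [mul_assoc]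
      _ = Bv⁻¹ * (Bv * Avᵀ) * (Bv⁻¹)ᵀ := by rw [h1]
      _ = Avᵀ * (Bv⁻¹)ᵀ := by rw [← mul_assoc, e2, one_mul]
  have d1w : Bw⁻¹ * Aw = Awᵀ * (Bw⁻¹)ᵀ := by
    calc Bw⁻¹ * Aw = Bw⁻¹ * Aw * (Bwᵀ * (Bw⁻¹)ᵀ) := by rw [tw1, mul_one]
      _ = Bw⁻¹ * (Aw * Bwᵀ) * (Bw⁻¹)ᵀ := by simp only [mul_assoc]
      _ = Bw⁻¹ * (Bw * Awᵀ) * (Bw⁻¹)ᵀ := by rw [h2]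
      _ = Awᵀ * (Bw⁻¹)ᵀ := by rw [← mul_assoc, f2, one_mul]
  have hS : (Bv⁻¹ * Av)ᵀ = Bv⁻¹ * Av := by
    rw [Matrix.transpose_mul]; exact d1.symm
  have hQsym : (Bw⁻¹ * Aw)ᵀ = Bw⁻¹ * Aw := by
    rw [Matrix.transpose_mul]; exact d1w.symm
  have step : Bv * (Bv⁻¹ * Av - Bw⁻¹ * Aw) * Bwᵀ = 1 := by
    calc Bv * (Bv⁻¹ * Av - Bw⁻¹ * Aw) * Bwᵀ
        = Bv * (Bv⁻¹ * Av) * Bwᵀ - Bv * (Awᵀ * (Bw⁻¹)ᵀ) * Bwᵀ := by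
          rw [d1w, Matrix.mul_sub, Matrix.sub_mul]
      _ = Av * Bwᵀ - Bv * Awᵀ := by
          rw [← mul_assoc Bv Bv⁻¹ Av, e1, one_mul]
          congr 1
          calc Bv * (Awᵀ * (Bw⁻¹)ᵀ) * Bwᵀ = Bv * Awᵀ * ((Bw⁻¹)ᵀ * Bwᵀ) := by
                simp only [mul_assoc]
            _ = Bv * Awᵀ := by rw [tw2, mul_one]
      _ = 1 := h3
  have hR : Bv⁻¹ * Av - Bw⁻¹ * Aw = Bv⁻¹ * (Bw⁻¹)ᵀ := by
    calc Bv⁻¹ * Av - Bw⁻¹ * Aw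
        = (Bv⁻¹ * Bv) * (Bv⁻¹ * Av - Bw⁻¹ * Aw) * (Bwᵀ * (Bw⁻¹)ᵀ) := by
          rw [e2, tw1, one_mul, mul_one]
      _ = Bv⁻¹ * (Bv * (Bv⁻¹ * Av - Bw⁻¹ * Aw) * Bwᵀ) * (Bw⁻¹)ᵀ := by
          simp only [mul_assoc]
      _ = Bv⁻¹ * (Bw⁻¹)ᵀ := by rw [step, mul_one]
  have hRsym : (Bv⁻¹ * (Bw⁻¹)ᵀ)ᵀ = Bv⁻¹ * (Bw⁻¹)ᵀ := by
    rw [← hR, Matrix.transpose_sub, hS, hQsym]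
  have sym12 : Bw⁻¹ * (Bv⁻¹)ᵀ = Bv⁻¹ * (Bw⁻¹)ᵀ := by
    have := hRsym
    rwa [Matrix.transpose_mul, Matrix.transpose_transpose] at this
  have hK : (Bv⁻¹)ᵀ * Bwᵀ = Bw * Bv⁻¹ := by
    calc (Bv⁻¹)ᵀ * Bwᵀ = Bw * (Bw⁻¹ * (Bv⁻¹)ᵀ) * Bwᵀ := by
          rw [← mul_assoc, f1, one_mul]
      _ = Bw * (Bv⁻¹ * (Bw⁻¹)ᵀ) * Bwᵀ := by rw [sym12]
      _ = Bw * Bv⁻¹ * ((Bw⁻¹)ᵀ * Bwᵀ) := by simp only [mul_assoc]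
      _ = Bw * Bv⁻¹ := by rw [tw2, mul_one]
  have hKsym : ((Bv⁻¹)ᵀ * Bwᵀ)ᵀ = (Bv⁻¹)ᵀ * Bwᵀ := by
    rw [Matrix.transpose_mul, Matrix.transpose_transpose, Matrix.transpose_transpose, hK]
  have hKBv : (Bv⁻¹)ᵀ * Bwᵀ * Bv = Bw := by
    rw [hK, mul_assoc, e2, mul_one]
  have hKAv : (Bv⁻¹)ᵀ * Bwᵀ * Av = Aw + (Bv⁻¹)ᵀ := by
    have hS' : Bv⁻¹ * Av = Bv⁻¹ * (Bw⁻¹)ᵀ + Bw⁻¹ * Aw := sub_eq_iff_eq_add.mp hR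
    calc (Bv⁻¹)ᵀ * Bwᵀ * Av = Bw * (Bv⁻¹ * Av) := by rw [hK, mul_assoc]
      _ = Bw * (Bv⁻¹ * (Bw⁻¹)ᵀ) + Bw * (Bw⁻¹ * Aw) := by rw [hS', Matrix.mul_add]
      _ = Aw + (Bv⁻¹)ᵀ := by
          rw [← sym12, ← mul_assoc, ← mul_assoc, f1, one_mul, one_mul, add_comm]
  exact ⟨hS, hKsym, hKBv, hKAv⟩


/-- Let `{v_1,…,v_d, w_1,…,w_d}` be a symplectic basis of `ℝ^{2d}`
with `det B_v ≠ 0` and `det B_w ≠ 0`. Then for every Schwartz function `g` and every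
`(p,q) ∈ ℝ^d × ℝ^d` there is a constant `c_{p,q} ∈ ℂ` with `|c_{p,q}| = 1` such that
for all `ξ`, `𝓕̃_v(T_{p,q}(g))(ξ) = c_{p,q} T_{p',q'}(𝓕̃_v(g))(ξ)
= c_{p,q} e^{2πi q'·ξ} 𝓕̃_v(g)(ξ + p')`, where `p' = A_v p + B_v q` and
`q' = A_w p + B_w q`. -/
theorem gabor_to_gabor_in_modified_representation
    (d : ℕ) (v w : Fin d → (Fin d → ℝ) × (Fin d → ℝ))
    (hbasis : LinearIndependent ℝ (Sum.elim v w))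
    (hvv : ∀ i j, Omega (v i) (v j) = 0)
    (hww : ∀ i j, Omega (w i) (w j) = 0)
    (hvw : ∀ i j, Omega (v i) (w j) = if i = j then 1 else 0)
    (hBv : (Bmat v).det ≠ 0) (hBw : (Bmat w).det ≠ 0) :
    ∀ (g : SchwartzMap (Fin d → ℝ) ℂ) (p q : Fin d → ℝ),
      ∃ c : ℂ, ‖c‖ = 1 ∧
        ∀ ξ : Fin d → ℝ,
          FtildeV (Amat v) (Bmat v) (Bmat w) (tmod (⇑g) p q) ξ =
            c * tmod (FtildeV (Amat v) (Bmat v) (Bmat w) (⇑g))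
              ((Amat v).mulVec p + (Bmat v).mulVec q)
              ((Amat w).mulVec p + (Bmat w).mulVec q) ξ := by
  have hBv' : IsUnit (Bmat v).det := isUnit_iff_ne_zero.mpr hBv
  have hBw' : IsUnit (Bmat w).det := isUnit_iff_ne_zero.mpr hBw
  have h1 : Amat v * (Bmat v)ᵀ = Bmat v * (Amat v)ᵀ := by
    ext i j
    have h := hvv i j
    simp only [Omega, dotR, Amat, Bmat, Matrix.mul_apply, Matrix.transpose_apply,
      Matrix.of_apply] at h ⊢
    linarith
  have h2 : Amat w * (Bmat w)ᵀ = Bmat w * (Amat w)ᵀ := by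
    ext i j
    have h := hww i j
    simp only [Omega, dotR, Amat, Bmat, Matrix.mul_apply, Matrix.transpose_apply,
      Matrix.of_apply] at h ⊢
    linarith
  have h3 : Amat v * (Bmat w)ᵀ - Bmat v * (Amat w)ᵀ = 1 := by
    ext i j
    have h := hvw i j
    simp only [Omega, dotR, Amat, Bmat, Matrix.sub_apply, Matrix.mul_apply,
      Matrix.transpose_apply, Matrix.of_apply, Matrix.one_apply] at h ⊢
    rw [← h]
  obtain ⟨hS, hKsym, hKBv, hKAv⟩ :=
    matrix_facts (Amat v) (Bmat v) (Amat w) (Bmat w) h1 h2 h3 hBv' hBw'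
  have e2 : (Bmat v)⁻¹ * Bmat v = 1 := Matrix.nonsing_inv_mul _ hBv'
  intro g p q
  exact key_lemma (Amat v) (Bmat v) (Amat w) (Bmat w) hS hKsym hKBv hKAv e2 (⇑g) p q


end BLT17
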